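/- arXiv:math/0311070 — 2 statements merged into one kernel-verified Lean document; each statement's English description precedes it below -/
import Mathlib

section
/- Let (X,q,μ) be a pq-space and f : X → ℝ a left 1-Lipschitz function. Then (μ⊗μ)({(x,y) : f(x) − f(y) ≥ ε}) ≤ α^L(ε/2) + α^R(ε/2) for every ε > 0. -/
/-!
Let `m` be a median of `f`. As `f` is left 1-Lipschitz, the slab `{m + ε/2 ≤ f}` misses the right
`ε/2`-neighbourhood of `{f ≤ m}` and the slab `{f ≤ m - ε/2}` misses the left `ε/2`-neighbourhood
of `{m ≤ f}`; both of these sets have measure at least `1/2`, so the slabs have measure at most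
`α^R(ε/2)` and `α^L(ε/2)`. Finally, `ε ≤ f x - f y` forces `m + ε/2 ≤ f x` or `f y ≤ m - ε/2`.
-/

open MeasureTheory Set

section QM
variable {X : Type*}

/-- A quasi-metric on `X`: nonnegative, separates points (both distances zero iff equal),
and satisfies the triangle inequality. -/
def IsQuasiMetric (q : X → X → ℝ) : Prop :=
  (∀ x y, 0 ≤ q x y) ∧ (∀ x y, (q x y = 0 ∧ q y x = 0) ↔ x = y) ∧
  (∀ x y z, q x z ≤ q x y + q y z)

/-- Left ε-neighbourhood of a set: points at left distance < ε from `A`. -/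
def leftNbhd (q : X → X → ℝ) (A : Set X) (ε : ℝ) : Set X := {x | ∃ a ∈ A, q a x < ε}

/-- Right ε-neighbourhood of a set. -/
def rightNbhd (q : X → X → ℝ) (A : Set X) (ε : ℝ) : Set X := {x | ∃ a ∈ A, q x a < ε}

/-- Left concentration function of a pq-space (for ε > 0). -/
noncomputable def concL [MeasurableSpace X] (q : X → X → ℝ) (μ : Measure X) (ε : ℝ) : ℝ :=
  sSup {r | ∃ A : Set X, MeasurableSet A ∧ 1/2 ≤ (μ A).toReal ∧
    r = 1 - (μ (leftNbhd q A ε)).toReal}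

/-- Right concentration function of a pq-space (for ε > 0). -/
noncomputable def concR [MeasurableSpace X] (q : X → X → ℝ) (μ : Measure X) (ε : ℝ) : ℝ :=
  sSup {r | ∃ A : Set X, MeasurableSet A ∧ 1/2 ≤ (μ A).toReal ∧
    r = 1 - (μ (rightNbhd q A ε)).toReal}

end QM

open Filter Topology

namespace ProbabilityTheory

theorem exists_median (ν : Measure ℝ) [IsProbabilityMeasure ν] :
    ∃ m, 1 / 2 ≤ ν.real (Iic m) ∧ 1 / 2 ≤ ν.real (Ici m) := by
  set F := cdf ν
  set S := {t | 1 / 2 ≤ F t}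
  have hS : S.Nonempty :=
    ((tendsto_cdf_atTop ν).eventually (eventually_ge_nhds (by norm_num))).exists
  obtain ⟨t₀, ht₀⟩ := eventually_atBot.1
    ((tendsto_cdf_atBot ν).eventually (eventually_lt_nhds (by norm_num : (0 : ℝ) < 1 / 2)))
  have hS_bdd : BddBelow S := ⟨t₀, fun s hs => le_of_not_gt fun hlt => (ht₀ s hlt.le).not_ge hs⟩
  set m := sInf S
  have h_right : 1 / 2 ≤ F m := by
    refine ge_of_tendsto ((F.right_continuous m).mono Ioi_subset_Ici_self)
      (eventually_nhdsWithin_of_forall fun t (ht : t ∈ Ioi m) => ?_)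
    obtain ⟨s, hs, hst⟩ := exists_lt_of_csInf_lt hS ht
    exact hs.trans (F.mono hst.le)
  have h_left : Function.leftLim F m ≤ 1 / 2 :=
    le_of_tendsto (F.mono.tendsto_leftLim m) (eventually_nhdsWithin_of_forall
      fun t (ht : t ∈ Iio m) => le_of_lt (not_le.1 fun h : t ∈ S => (csInf_le hS_bdd h).not_gt ht))
  refine ⟨m, by rwa [← cdf_eq_real], ?_⟩
  rw [measureReal_def, ← measure_cdf ν, StieltjesFunction.measure_Ici _ (tendsto_cdf_atTop ν),
    ENNReal.toReal_ofReal (by linarith)]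
  linarith

end ProbabilityTheory

section Concentration

variable {X : Type*} [MeasurableSpace X] {μ : Measure X} [IsProbabilityMeasure μ]

theorem measureReal_le_sSup_one_sub_of_disjoint (N : Set X → Set X) {A S : Set X}
    (hA : MeasurableSet A) (hA_half : 1 / 2 ≤ μ.real A) (hS : MeasurableSet S)
    (hNS : Disjoint (N A) S) :
    μ.real S ≤ sSup {r | ∃ A : Set X, MeasurableSet A ∧ 1/2 ≤ (μ A).toReal ∧
      r = 1 - (μ (N A)).toReal} := by
  have h_bdd : BddAbove {r | ∃ A : Set X, MeasurableSet A ∧ 1/2 ≤ (μ A).toReal ∧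
      r = 1 - (μ (N A)).toReal} := by
    refine ⟨1, ?_⟩
    rintro r ⟨A, -, -, rfl⟩
    linarith [ENNReal.toReal_nonneg (a := μ (N A))]
  refine le_trans ?_ (le_csSup h_bdd ⟨A, hA, hA_half, rfl⟩)
  have : μ.real (N A) + μ.real S ≤ 1 := measureReal_union (μ := μ) hNS hS ▸ measureReal_le_one
  change μ.real S ≤ 1 - μ.real (N A)
  linarith

theorem measureReal_le_concL {q : X → X → ℝ} {A S : Set X} {ε : ℝ} (hA : MeasurableSet A)
    (hA_half : 1 / 2 ≤ μ.real A) (hS : MeasurableSet S) (hAS : Disjoint (leftNbhd q A ε) S) :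
    μ.real S ≤ concL q μ ε :=
  measureReal_le_sSup_one_sub_of_disjoint (leftNbhd q · ε) hA hA_half hS hAS

theorem measureReal_le_concR {q : X → X → ℝ} {A S : Set X} {ε : ℝ} (hA : MeasurableSet A)
    (hA_half : 1 / 2 ≤ μ.real A) (hS : MeasurableSet S) (hAS : Disjoint (rightNbhd q A ε) S) :
    μ.real S ≤ concR q μ ε :=
  measureReal_le_sSup_one_sub_of_disjoint (rightNbhd q · ε) hA hA_half hS hAS

end Concentration

section LeftLipschitz

variable {X : Type*} {q : X → X → ℝ} {f : X → ℝ}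

theorem disjoint_rightNbhd_sublevel (hf : ∀ x y, f x - f y ≤ q x y) (m δ : ℝ) :
    Disjoint (rightNbhd q {x | f x ≤ m} δ) {x | m + δ ≤ f x} := by
  rw [disjoint_left]
  rintro x ⟨a, ha, hxa⟩ hx
  linarith [hf x a, show f a ≤ m from ha, show m + δ ≤ f x from hx]

theorem disjoint_leftNbhd_superlevel (hf : ∀ x y, f x - f y ≤ q x y) (m δ : ℝ) :
    Disjoint (leftNbhd q {x | m ≤ f x} δ) {x | f x ≤ m - δ} := by
  rw [disjoint_left]
  rintro y ⟨b, hb, hby⟩ hy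
  linarith [hf b y, show m ≤ f b from hb, show f y ≤ m - δ from hy]

end LeftLipschitz

theorem measureReal_prod_le_of_sub_ge {X Y : Type*} [MeasurableSpace X] [MeasurableSpace Y]
    (μ : Measure X) (ν : Measure Y) [IsProbabilityMeasure μ] [IsProbabilityMeasure ν]
    (f : X → ℝ) (g : Y → ℝ) (m ε : ℝ) :
    (μ.prod ν).real {p | ε ≤ f p.1 - g p.2} ≤
      μ.real {x | m + ε / 2 ≤ f x} + ν.real {y | g y ≤ m - ε / 2} := by
  have h_cover : {p : X × Y | ε ≤ f p.1 - g p.2} ⊆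
      {x | m + ε / 2 ≤ f x} ×ˢ univ ∪ univ ×ˢ {y | g y ≤ m - ε / 2} := by
    rintro ⟨x, y⟩ (hxy : ε ≤ f x - g y)
    by_cases hx : m + ε / 2 ≤ f x
    · exact Or.inl ⟨hx, trivial⟩
    · exact Or.inr ⟨trivial, show g y ≤ m - ε / 2 by linarith⟩
  calc (μ.prod ν).real {p | ε ≤ f p.1 - g p.2}
      ≤ (μ.prod ν).real ({x | m + ε / 2 ≤ f x} ×ˢ univ ∪ univ ×ˢ {y | g y ≤ m - ε / 2}) :=
        measureReal_mono h_cover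
    _ ≤ _ := measureReal_union_le _ _
    _ = _ := by simp only [measureReal_prod_prod, probReal_univ, mul_one, one_mul]

theorem pair_deviation_general {X : Type*} [MeasurableSpace X]
    (q : X → X → ℝ)
    (μ : Measure X) [IsProbabilityMeasure μ]
    (f : X → ℝ) (hmeas : Measurable f) (hf : ∀ x y, f x - f y ≤ q x y)
    (ε : ℝ) :
    ((μ.prod μ) {p : X × X | ε ≤ f p.1 - f p.2}).toReal ≤
      concL q μ (ε/2) + concR q μ (ε/2) := by
  have := Measure.isProbabilityMeasure_map (μ := μ) hmeas.aemeasurable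
  obtain ⟨m, h_sub, h_super⟩ := ProbabilityTheory.exists_median (μ.map f)
  rw [map_measureReal_apply hmeas measurableSet_Iic] at h_sub
  rw [map_measureReal_apply hmeas measurableSet_Ici] at h_super
  calc (μ.prod μ).real {p : X × X | ε ≤ f p.1 - f p.2}
      ≤ μ.real {x | m + ε / 2 ≤ f x} + μ.real {x | f x ≤ m - ε / 2} :=
        measureReal_prod_le_of_sub_ge μ μ f f m ε
    _ ≤ concR q μ (ε / 2) + concL q μ (ε / 2) :=
        add_le_add
          (measureReal_le_concR (hmeas measurableSet_Iic) h_sub (hmeas measurableSet_Ici)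
            (disjoint_rightNbhd_sublevel hf m (ε / 2)))
          (measureReal_le_concL (hmeas measurableSet_Ici) h_super (hmeas measurableSet_Iic)
            (disjoint_leftNbhd_superlevel hf m (ε / 2)))
    _ = concL q μ (ε / 2) + concR q μ (ε / 2) := add_comm _ _

/-- deviation between values of a left 1-Lipschitz function at two random
points is controlled by the concentration functions. -/
theorem pair_deviation {X : Type*} [MeasurableSpace X]
    (q : X → X → ℝ) (hq : IsQuasiMetric q)
    (μ : Measure X) [IsProbabilityMeasure μ]
    (f : X → ℝ) (hmeas : Measurable f) (hf : ∀ x y, f x - f y ≤ q x y)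
    (ε : ℝ) (hε : 0 < ε) :
    ((μ.prod μ) {p : X × X | ε ≤ f p.1 - f p.2}).toReal ≤
      concL q μ (ε/2) + concR q μ (ε/2) :=
  pair_deviation_general q μ f hmeas hf ε
end

section
/- Let X = {a,b} with probability measure μ({a}) = 2/3, μ({b}) = 1/3, and quasi-metric q_n with q_n(a,b) = 1 and q_n(b,a) = 1/n for n ≥ 1. Then the right concentration functions α^R_n converge pointwise to 0 on (0,∞), while the left concentration functions α^L_n do not: α^L_n(ε) = 1/3 for all n whenever 0 < ε ≤ 1. -/
/-! The sets of measure at least `1/2` are exactly those containing the heavy point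
`a = false`. Every point is within `1/n` of `a` on the right, so once `1/n < ε` the right
`ε`-neighbourhood of such a set is the whole space. On the left, `b = true` stays at distance
`1` from `a`, so for `ε ≤ 1` the left `ε`-neighbourhood of `{a}` misses `b`, of mass `1/3`. -/

open MeasureTheory Set

section ConcentrationFunction
variable {X : Type*} [MeasurableSpace X] {q : X → X → ℝ} {μ : Measure X} {ε : ℝ}

theorem concR_eq_zero_of_forall [IsProbabilityMeasure μ]
    (h : ∀ A, MeasurableSet A → 1/2 ≤ (μ A).toReal → μ (rightNbhd q A ε) = 1) :
    concR q μ ε = 0 := by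
  have hzero : ∀ A, MeasurableSet A → 1/2 ≤ (μ A).toReal →
      1 - (μ (rightNbhd q A ε)).toReal = 0 := fun A hA hμA => by simp [h A hA hμA]
  have huniv : (1:ℝ)/2 ≤ (μ univ).toReal := by norm_num
  refine IsGreatest.csSup_eq ⟨⟨univ, .univ, huniv, (hzero _ .univ huniv).symm⟩, ?_⟩
  rintro r ⟨A, hA, hμA, rfl⟩
  exact (hzero A hA hμA).le

end ConcentrationFunction

section TwoPointSpace
variable {μ : Measure Bool} [IsProbabilityMeasure μ]
  (hμa : μ {false} = 2/3) (hμb : μ {true} = 1/3)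
include hμb

theorem false_mem_of_half_le_measure {A : Set Bool} (hA : 1/2 ≤ (μ A).toReal) : false ∈ A := by
  by_contra hfalse
  have hsub : A ⊆ {true} := fun x hx => by cases x <;> simp_all
  have : (μ A).toReal ≤ 1/3 := by
    calc (μ A).toReal ≤ (μ {true}).toReal :=
          ENNReal.toReal_mono (measure_ne_top _ _) (measure_mono hsub)
      _ = 1/3 := by rw [hμb, ENNReal.toReal_div]; norm_num
  linarith

theorem concR_eq_zero_of_forall_lt {q : Bool → Bool → ℝ} {ε : ℝ} (hq : ∀ x, q x false < ε) :
    concR q μ ε = 0 := by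
  refine concR_eq_zero_of_forall fun A _ hA => ?_
  have hnbhd : rightNbhd q A ε = univ :=
    eq_univ_of_forall fun x => ⟨false, false_mem_of_half_le_measure hμb hA, hq x⟩
  rw [hnbhd, measure_univ]

include hμa

theorem concL_eq_one_third {q : Bool → Bool → ℝ} {ε : ℝ}
    (h0 : q false false < ε) (h1 : ε ≤ q false true) : concL q μ ε = 1/3 := by
  have hfalse : (μ {false}).toReal = 2/3 := by rw [hμa, ENNReal.toReal_div]; norm_num
  have hsingleton : leftNbhd q {false} ε = {false} := by
    ext x
    cases x
    · simpa [leftNbhd] using h0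
    · simpa [leftNbhd] using h1
  refine IsGreatest.csSup_eq ⟨⟨{false}, measurableSet_singleton _, ?_, ?_⟩, ?_⟩
  · rw [hfalse]; norm_num
  · rw [hsingleton, hfalse]; norm_num
  rintro r ⟨A, -, hA, rfl⟩
  have hmem : false ∈ leftNbhd q A ε := ⟨false, false_mem_of_half_le_measure hμb hA, h0⟩
  have : 2/3 ≤ (μ (leftNbhd q A ε)).toReal := hfalse ▸
    ENNReal.toReal_mono (measure_ne_top _ _) (measure_mono (singleton_subset_iff.2 hmem))
  linarith

end TwoPointSpace

/-- the two-point example (a = `false`, b = `true`) is a right but not a left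
Lévy family: `α^R_n → 0` pointwise on `(0,∞)` while `α^L_n ε = 1/3` for `0 < ε ≤ 1`. -/
theorem two_point_right_not_left_levy
    (μ : Measure Bool) [IsProbabilityMeasure μ]
    (hμa : μ {false} = 2/3) (hμb : μ {true} = 1/3)
    (q : ℕ → Bool → Bool → ℝ)
    (hq0 : ∀ n x, q n x x = 0)
    (hqab : ∀ n, q n false true = 1)
    (hqba : ∀ n : ℕ, 1 ≤ n → q n true false = 1 / (n : ℝ)) :
    (∀ ε : ℝ, 0 < ε →
        Filter.Tendsto (fun n => concR (q n) μ ε) Filter.atTop (nhds 0)) ∧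
    (∀ n : ℕ, 1 ≤ n → ∀ ε : ℝ, 0 < ε → ε ≤ 1 → concL (q n) μ ε = 1/3) := by
  refine ⟨fun ε hε => ?_, fun n _ ε hε hε1 => ?_⟩
  · have hsmall : ∀ᶠ n : ℕ in Filter.atTop, 1 / (n : ℝ) < ε :=
      tendsto_one_div_atTop_nhds_zero_nat.eventually (gt_mem_nhds hε)
    refine tendsto_const_nhds.congr' ?_
    filter_upwards [hsmall, Filter.eventually_ge_atTop 1] with n hn hn1
    refine (concR_eq_zero_of_forall_lt hμb fun x => ?_).symm
    cases x
    · rwa [hq0]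
    · rwa [hqba n hn1]
  · exact concL_eq_one_third hμa hμb (by rwa [hq0]) (by rw [hqab]; exact hε1)
end
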